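/- arXiv:2208.00755 — 3 statements merged into one kernel-verified Lean document; each statement's English description precedes it below -/
import Mathlib

section
/- Let S and A be nonempty finite sets, let P be a transition kernel on S × A, let r : S × A → ℝ, let γ ∈ [0,1), and let π be a policy. Then the Bellman operator T^π has exactly one fixed point Q^π : S × A → ℝ, i.e. there exists Q^π with T^π Q^π = Q^π, and any Q with T^π Q = Q satisfies Q = Q^π. -/
open Finset

/-- `p` is a probability mass function on a finite type. -/
def IsPMF {X : Type*} [Fintype X] (p : X → ℝ) : Prop :=
  (∀ x, 0 ≤ p x) ∧ ∑ x, p x = 1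

variable {S A : Type*}

/-- Expectation of `Q` over actions under policy `π` at state `s`:
`E_π Q(s) = Σ_a π(s)(a) · Q(s,a)`. -/
def Epol [Fintype A] (π : S → A → ℝ) (Q : S × A → ℝ) (s : S) : ℝ :=
  ∑ a, π s a * Q (s, a)

/-- The Bellman operator `T^π`:
`(T^π Q)(s,a) = r(s,a) + γ · Σ_{s'} P(s,a)(s') · E_π Q(s')`. -/
def bellman [Fintype S] [Fintype A] (P : S → A → S → ℝ) (r : S × A → ℝ) (γ : ℝ)
    (π : S → A → ℝ) (Q : S × A → ℝ) : S × A → ℝ :=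
  fun p => r p + γ * ∑ s', P p.1 p.2 s' * Epol π Q s'

/-- The law `μ_t^{(s,a)}` of the state-action pair at time `t`, starting from the
point mass at `init` and then following the transition kernel `P` and the
behaviour policy `η`. -/
def mu [Fintype S] [Fintype A] [DecidableEq S] [DecidableEq A]
    (P : S → A → S → ℝ) (η : S → A → ℝ) (init : S × A) : ℕ → S × A → ℝ
  | 0 => fun p => if p = init then 1 else 0
  | t + 1 => fun p => (∑ q : S × A, mu P η init t q * P q.1 q.2 p.1) * η p.1 p.2

/-- The `S`-marginal `ν_t^{(s,a)}` of `μ_t^{(s,a)}`. -/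
def nu [Fintype S] [Fintype A] [DecidableEq S] [DecidableEq A]
    (P : S → A → S → ℝ) (η : S → A → ℝ) (init : S × A) (t : ℕ) (y : S) : ℝ :=
  ∑ b, mu P η init t (y, b)

/-- The one-step importance sampling operator `H`:
`H Q(s,a) = Q(s,a) + Σ_{t≥0} γ^t · E_{(s_t,a_t)∼μ_t^{(s,a)}}[ λ_t(a_t) ·
  (r(s_t,a_t) + γ · Σ_{s'} P(s_t,a_t)(s') · E_π Q(s') − Q(s_t,a_t)) ]`. -/
noncomputable def Hop [Fintype S] [Fintype A] [DecidableEq S] [DecidableEq A]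
    (P : S → A → S → ℝ) (r : S × A → ℝ) (γ : ℝ) (π η : S → A → ℝ)
    (lam : ℕ → A → ℝ) (Q : S × A → ℝ) : S × A → ℝ :=
  fun sa => Q sa + ∑' t : ℕ, γ ^ t *
    ∑ p : S × A, mu P η sa t p *
      (lam t p.2 * (r p + γ * ∑ s', P p.1 p.2 s' * Epol π Q s' - Q p))

/-- The state-action–dependent contraction coefficient
`ξ(s,a) = Σ_{t≥1} γ^t · E_{(s_t,a_t)∼μ_t^{(s,a)}}[1 − λ_t(a_t)]`. -/
noncomputable def xi [Fintype S] [Fintype A] [DecidableEq S] [DecidableEq A]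
    (P : S → A → S → ℝ) (γ : ℝ) (η : S → A → ℝ) (lam : ℕ → A → ℝ)
    (sa : S × A) : ℝ :=
  ∑' t : ℕ, γ ^ (t + 1) *
    ∑ p : S × A, mu P η sa (t + 1) p * (1 - lam (t + 1) p.2)

/-- The Bellman operator `T^π` has exactly one fixed point `Q^π`. -/
theorem bellman_existsUnique_fixedPoint
    [Fintype S] [Nonempty S] [Fintype A] [Nonempty A]
    (P : S → A → S → ℝ) (hP : ∀ s a, IsPMF (P s a))
    (r : S × A → ℝ) (γ : ℝ) (hγ0 : 0 ≤ γ) (hγ1 : γ < 1)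
    (π : S → A → ℝ) (hπ : ∀ s, IsPMF (π s)) :
    ∃! Qpi : S × A → ℝ, bellman P r γ π Qpi = Qpi := by
  have hcontract : ContractingWith ⟨γ, hγ0⟩ (bellman P r γ π) := by
    constructor
    · exact_mod_cast hγ1
    · apply LipschitzWith.of_dist_le_mul
      intro Q1 Q2
      rw [dist_pi_le_iff (by positivity)]
      intro sa
      simp only [bellman, Real.dist_eq]
      have key : ∀ s', |Epol π Q1 s' - Epol π Q2 s'| ≤ dist Q1 Q2 := by
        intro s'
        rw [Epol, Epol, ← Finset.sum_sub_distrib]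
        calc |∑ a, (π s' a * Q1 (s', a) - π s' a * Q2 (s', a))|
            ≤ ∑ a, |π s' a * Q1 (s', a) - π s' a * Q2 (s', a)| :=
              Finset.abs_sum_le_sum_abs _ _
          _ ≤ ∑ a, π s' a * dist Q1 Q2 := by
              apply Finset.sum_le_sum
              intro a _
              rw [← mul_sub, abs_mul, abs_of_nonneg ((hπ s').1 a)]
              exact mul_le_mul_of_nonneg_left
                ((Real.dist_eq _ _ ▸ dist_le_pi_dist Q1 Q2 (s', a))) ((hπ s').1 a)
          _ = dist Q1 Q2 := by rw [← Finset.sum_mul, (hπ s').2, one_mul]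
      have h2 : |∑ s', P sa.1 sa.2 s' * Epol π Q1 s' - ∑ s', P sa.1 sa.2 s' * Epol π Q2 s'|
          ≤ dist Q1 Q2 := by
        rw [← Finset.sum_sub_distrib]
        calc |∑ s', (P sa.1 sa.2 s' * Epol π Q1 s' - P sa.1 sa.2 s' * Epol π Q2 s')|
            ≤ ∑ s', |P sa.1 sa.2 s' * Epol π Q1 s' - P sa.1 sa.2 s' * Epol π Q2 s'| :=
              Finset.abs_sum_le_sum_abs _ _
          _ ≤ ∑ s', P sa.1 sa.2 s' * dist Q1 Q2 := by
              apply Finset.sum_le_sum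
              intro s' _
              rw [← mul_sub, abs_mul, abs_of_nonneg ((hP sa.1 sa.2).1 s')]
              exact mul_le_mul_of_nonneg_left (key s') ((hP sa.1 sa.2).1 s')
          _ = dist Q1 Q2 := by rw [← Finset.sum_mul, (hP sa.1 sa.2).2, one_mul]
      calc |r sa + γ * ∑ s', P sa.1 sa.2 s' * Epol π Q1 s' -
              (r sa + γ * ∑ s', P sa.1 sa.2 s' * Epol π Q2 s')|
          = γ * |∑ s', P sa.1 sa.2 s' * Epol π Q1 s' -
              ∑ s', P sa.1 sa.2 s' * Epol π Q2 s'| := by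
            rw [add_sub_add_left_eq_sub, ← mul_sub, abs_mul, abs_of_nonneg hγ0]
        _ ≤ γ * dist Q1 Q2 := mul_le_mul_of_nonneg_left h2 hγ0
  refine ⟨hcontract.fixedPoint (bellman P r γ π), hcontract.fixedPoint_isFixedPt, ?_⟩
  intro Q hQ
  exact hcontract.fixedPoint_unique hQ
end

section
/- Let S and A be nonempty finite sets, let P be a transition kernel on S × A, let r : S × A → ℝ, let γ ∈ [0,1), let π and η be policies, and let λ_t : A → ℝ (t ∈ ℕ) satisfy 0 ≤ λ_t(a) ≤ 1 for all t and a. Let Q^π be the unique fixed point of the Bellman operator T^π. Then Q^π is a fixed point of the one-step importance sampling operator H: H Q^π = Q^π. -/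
open Finset

variable {S A : Type*}

/-- `Q^π`, the unique fixed point of the Bellman operator, is a fixed point of
the one-step importance sampling operator `H`. -/
theorem Hop_fixedPoint_of_bellman_fixedPoint
    [Fintype S] [Nonempty S] [Fintype A] [Nonempty A]
    [DecidableEq S] [DecidableEq A]
    (P : S → A → S → ℝ) (hP : ∀ s a, IsPMF (P s a))
    (r : S × A → ℝ) (γ : ℝ) (hγ0 : 0 ≤ γ) (hγ1 : γ < 1)
    (π : S → A → ℝ) (hπ : ∀ s, IsPMF (π s))
    (η : S → A → ℝ) (hη : ∀ s, IsPMF (η s))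
    (lam : ℕ → A → ℝ) (hlam : ∀ t a, 0 ≤ lam t a ∧ lam t a ≤ 1)
    (Qpi : S × A → ℝ) (hQpi : bellman P r γ π Qpi = Qpi) :
    Hop P r γ π η lam Qpi = Qpi := by
  funext sa
  have hz : ∀ p : S × A, r p + γ * ∑ s', P p.1 p.2 s' * Epol π Qpi s' - Qpi p = 0 := by
    intro p
    have := congrFun hQpi p
    simp [bellman] at this
    linarith
  simp only [Hop]
  have : ∀ t : ℕ, γ ^ t * ∑ p : S × A, mu P η sa t p *
      (lam t p.2 * (r p + γ * ∑ s', P p.1 p.2 s' * Epol π Qpi s' - Qpi p)) = 0 := by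
    intro t
    have : ∀ p : S × A, mu P η sa t p *
        (lam t p.2 * (r p + γ * ∑ s', P p.1 p.2 s' * Epol π Qpi s' - Qpi p)) = 0 := by
      intro p; rw [hz p]; ring
    simp [this]
  simp [this]
end

section
/- Let S and A be nonempty finite sets, let P be a transition kernel on S × A, let γ ∈ [0,1), let π and η be policies, and fix t ≥ 1. Suppose λ_t : A → ℝ satisfies 0 ≤ λ_t(b) and η(y)(b) · λ_t(b) ≤ π(y)(b) for all y ∈ S and b ∈ A. Then for every Δ : S × A → ℝ and every initial pair (s,a) ∈ S × A, the quantity E_{(s_t,a_t)∼μ_t^{(s,a)}}[ E_π Δ(s_t) − λ_t(a_t) · Δ(s_t,a_t) ] is a linear combination of the values Δ(y,b) with nonnegative coefficients, namely Σ_{y∈S} Σ_{b∈A} ν_t^{(s,a)}(y) · (π(y)(b) − η(y)(b)·λ_t(b)) · Δ(y,b) where ν_t^{(s,a)} is the S-marginal of μ_t^{(s,a)}, each coefficient ν_t^{(s,a)}(y)·(π(y)(b) − η(y)(b)·λ_t(b)) is nonnegative, and consequently | E_{(s_t,a_t)∼μ_t^{(s,a)}}[ E_π Δ(s_t) − λ_t(a_t)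 · Δ(s_t,a_t) ] | ≤ E_{(s_t,a_t)∼μ_t^{(s,a)}}[ 1 − λ_t(a_t) ] · max_{(y,b)} |Δ(y,b)|. -/
open Finset

variable {S A : Type*}

lemma mu_nonneg [Fintype S] [Fintype A] [DecidableEq S] [DecidableEq A]
    (P : S → A → S → ℝ) (hP : ∀ s a, IsPMF (P s a))
    (η : S → A → ℝ) (hη : ∀ s, IsPMF (η s)) (sa : S × A) :
    ∀ t p, 0 ≤ mu P η sa t p := by
  intro t
  induction t with
  | zero => intro p; simp only [mu]; split <;> norm_num
  | succ n ih =>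
    intro p
    simp only [mu]
    refine mul_nonneg (Finset.sum_nonneg fun q _ => mul_nonneg (ih q) ((hP q.1 q.2).1 p.1))
      ((hη p.1).1 p.2)

lemma mu_factor [Fintype S] [Fintype A] [DecidableEq S] [DecidableEq A]
    (P : S → A → S → ℝ) (η : S → A → ℝ) (hη : ∀ s, IsPMF (η s)) (sa : S × A)
    (n : ℕ) (y : S) (b : A) :
    mu P η sa (n + 1) (y, b) = nu P η sa (n + 1) y * η y b := by
  have : nu P η sa (n + 1) y = ∑ q : S × A, mu P η sa n q * P q.1 q.2 y := by
    simp only [nu, mu]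
    rw [← Finset.mul_sum, (hη y).2, mul_one]
  rw [this]; rfl

/-- The per-time-step residual is a nonnegative linear combination of the values
of `Δ`, and is bounded by `E[1 − λ_t(a_t)] · max |Δ|`. -/
theorem residual_nonneg_combination
    [Fintype S] [Nonempty S] [Fintype A] [Nonempty A]
    [DecidableEq S] [DecidableEq A]
    (P : S → A → S → ℝ) (hP : ∀ s a, IsPMF (P s a))
    (γ : ℝ) (hγ0 : 0 ≤ γ) (hγ1 : γ < 1)
    (π : S → A → ℝ) (hπ : ∀ s, IsPMF (π s))
    (η : S → A → ℝ) (hη : ∀ s, IsPMF (η s))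
    (t : ℕ) (ht : 1 ≤ t) (lam : A → ℝ)
    (hlam0 : ∀ b, 0 ≤ lam b)
    (hlamπ : ∀ y b, η y b * lam b ≤ π y b) :
    ∀ (Δ : S × A → ℝ) (sa : S × A),
      ((∑ p : S × A, mu P η sa t p * (Epol π Δ p.1 - lam p.2 * Δ p)) =
        ∑ y : S, ∑ b : A, nu P η sa t y * (π y b - η y b * lam b) * Δ (y, b))
      ∧ (∀ (y : S) (b : A), 0 ≤ nu P η sa t y * (π y b - η y b * lam b))
      ∧ |∑ p : S × A, mu P η sa t p * (Epol π Δ p.1 - lam p.2 * Δ p)| ≤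
          (∑ p : S × A, mu P η sa t p * (1 - lam p.2)) * ‖Δ‖ := by
  obtain ⟨n, rfl⟩ : ∃ n, t = n + 1 := ⟨t - 1, (Nat.succ_pred_eq_of_pos ht).symm⟩
  intro Δ sa
  have hnu : ∀ y, 0 ≤ nu P η sa (n + 1) y := fun y =>
    Finset.sum_nonneg fun b _ => mu_nonneg P hP η hη sa (n + 1) (y, b)
  have hcoef : ∀ (y : S) (b : A), 0 ≤ nu P η sa (n + 1) y * (π y b - η y b * lam b) :=
    fun y b => mul_nonneg (hnu y) (sub_nonneg.mpr (hlamπ y b))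
  -- main identity
  have key : (∑ p : S × A, mu P η sa (n + 1) p * (Epol π Δ p.1 - lam p.2 * Δ p)) =
      ∑ y : S, ∑ b : A, nu P η sa (n + 1) y * (π y b - η y b * lam b) * Δ (y, b) := by
    rw [Fintype.sum_prod_type]
    refine Finset.sum_congr rfl fun y _ => ?_
    simp only [mu_factor P η hη sa n y]
    have hη1 : ∑ b, η y b = 1 := (hη y).2
    set ν := nu P η sa (n + 1) y with hν
    have hE : ∑ b : A, ν * η y b * Epol π Δ y = ∑ b : A, ν * π y b * Δ (y, b) := by
      rw [← Finset.sum_mul, ← Finset.mul_sum, hη1, mul_one]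
      simp only [Epol, Finset.mul_sum, mul_assoc]
    calc ∑ b : A, ν * η y b * (Epol π Δ y - lam b * Δ (y, b))
        = ∑ b : A, (ν * η y b * Epol π Δ y - ν * (η y b * lam b) * Δ (y, b)) :=
          Finset.sum_congr rfl fun b _ => by ring
      _ = ∑ b : A, (ν * π y b * Δ (y, b) - ν * (η y b * lam b) * Δ (y, b)) := by
          rw [Finset.sum_sub_distrib, hE, ← Finset.sum_sub_distrib]
      _ = ∑ b : A, ν * (π y b - η y b * lam b) * Δ (y, b) :=
          Finset.sum_congr rfl fun b _ => by ring
  refine ⟨key, hcoef, ?_⟩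
  -- sum of coefficients identity
  have csum : (∑ y : S, ∑ b : A, nu P η sa (n + 1) y * (π y b - η y b * lam b)) =
      ∑ p : S × A, mu P η sa (n + 1) p * (1 - lam p.2) := by
    rw [Fintype.sum_prod_type]
    refine Finset.sum_congr rfl fun y _ => ?_
    simp only [mu_factor P η hη sa n y]
    have hπ1 : ∑ b, π y b = 1 := (hπ y).2
    have hη1 : ∑ b, η y b = 1 := (hη y).2
    have l1 : ∑ b : A, nu P η sa (n+1) y * (π y b - η y b * lam b)
        = nu P η sa (n+1) y * (1 - ∑ b : A, η y b * lam b) := by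
      rw [← Finset.mul_sum, Finset.sum_sub_distrib, hπ1]
    have l2 : ∑ b : A, nu P η sa (n+1) y * η y b * (1 - lam b)
        = nu P η sa (n+1) y * (1 - ∑ b : A, η y b * lam b) := by
      have e : ∀ b : A, nu P η sa (n+1) y * η y b * (1 - lam b)
          = nu P η sa (n+1) y * (η y b - η y b * lam b) := fun b => by ring
      simp only [e]
      rw [← Finset.mul_sum, Finset.sum_sub_distrib, hη1]
    rw [l1, l2]
  rw [key, ← csum]
  calc |∑ y : S, ∑ b : A, nu P η sa (n + 1) y * (π y b - η y b * lam b) * Δ (y, b)|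
      ≤ ∑ y : S, ∑ b : A, |nu P η sa (n + 1) y * (π y b - η y b * lam b) * Δ (y, b)| :=
        (Finset.abs_sum_le_sum_abs _ _).trans
          (Finset.sum_le_sum fun y _ => Finset.abs_sum_le_sum_abs _ _)
    _ ≤ ∑ y : S, ∑ b : A, nu P η sa (n + 1) y * (π y b - η y b * lam b) * ‖Δ‖ := by
        refine Finset.sum_le_sum fun y _ => Finset.sum_le_sum fun b _ => ?_
        rw [abs_mul, abs_of_nonneg (hcoef y b)]
        exact mul_le_mul_of_nonneg_left
          ((Real.norm_eq_abs _ ▸ norm_le_pi_norm Δ (y, b))) (hcoef y b)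
    _ = (∑ y : S, ∑ b : A, nu P η sa (n + 1) y * (π y b - η y b * lam b)) * ‖Δ‖ := by
        simp [Finset.sum_mul]
end
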